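/- (Multivariate symmetric Hermite interpolation) With notation as above, let g be a symmetric polynomial in U = (U_1,...,U_{p−k}) of degree at most k in each variable, and write g(U) = Σ_{K ⊂_k P} g_K · V[K‖U)/(V[P]·V(U)). Then the coefficients are given by g_K = (−1)^{k(p−k)} · s_K · h(P∖K), where h(X_{P∖K}) = ∂^{[P∖K]}( V(X_{P∖K}) · g(X_{P∖K}) ), i.e., h is obtained by applying to V·g the Hermite derivation operator (for each (x_i,j) ∈ P∖K, take (1/j!)·∂^j with respect to the corresponding variable) and then substituting the roots. -/

import Mathlib

noncomputable section

open Polynomial Finset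

variable {R : Type*} [CommRing R]

/-- Hermite-derivated Vandermonde column: entry in row `r` of the column attached to
the pair `(z, j)` is `(1/j!)·dʲ/dzʲ zʳ = C(r,j)·z^(r-j)`. -/
def hcol (n : ℕ) (zj : R × ℕ) : Fin n → R :=
  fun r => ((r : ℕ).choose zj.2 : R) * zj.1 ^ ((r : ℕ) - zj.2)

/-- Generalized (confluent) Vandermonde determinant of a list of
(point, derivation order) pairs. -/
def gvd (l : List (R × ℕ)) : R :=
  (Matrix.of fun i j : Fin l.length => hcol l.length (l.get j) i).det

/-- View a list of ring elements as underivated column data. -/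
def plain (l : List R) : List (R × ℕ) := l.map (fun x => (x, 0))

/-- `Pi2 A B = ∏_{x ∈ A, y ∈ B} (x - y)`. -/
def Pi2 (A B : List R) : R := (A.map fun x => (B.map fun y => x - y).prod).prod

/-- The ordered sublist of values of `f` indexed by a finite set of positions. -/
def subL {α : Type*} {n : ℕ} (f : Fin n → α) (S : Finset (Fin n)) : List α :=
  (S.sort (· ≤ ·)).map f

/-- The list enumerating first the complement of `S` in increasing order,
then `S` in increasing order. -/
def splitList {n : ℕ} (S : Finset (Fin n)) : List (Fin n) :=
  (Sᶜ.sort (· ≤ ·)) ++ (S.sort (· ≤ ·))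

lemma splitList_length {n : ℕ} (S : Finset (Fin n)) : (splitList S).length = n := by
  have h : S.card ≤ n := le_trans (Finset.card_le_univ S) (by simp)
  simp [splitList, Finset.card_compl]
  omega

lemma splitList_nodup {n : ℕ} (S : Finset (Fin n)) : (splitList S).Nodup := by
  refine List.Nodup.append (Finset.sort_nodup _ _) (Finset.sort_nodup _ _) ?_
  intro a ha hb
  rw [Finset.mem_sort] at ha hb
  exact (Finset.mem_compl.mp ha) hb

/-- The permutation of `Fin n` sending `i` to the `i`-th element of the list
`(Sᶜ sorted) ++ (S sorted)`. -/
def splitPerm {n : ℕ} (S : Finset (Fin n)) : Equiv.Perm (Fin n) :=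
  Equiv.ofBijective (fun i => (splitList S).get (finCongr (splitList_length S).symm i))
    (Finite.injective_iff_bijective.mp
      (fun i j h => (finCongr (splitList_length S).symm).injective
        (List.nodup_iff_injective_get.mp (splitList_nodup S) h)))

/-- The signature `s_S` of the permutation putting the ambient ordered set in the
order (complement of S)‖S. -/
def sgnK {n : ℕ} (S : Finset (Fin n)) : ℤ := Equiv.Perm.sign (splitPerm S)

/-- `V[L‖U)` : generalized Vandermonde determinant over `K[U]` of derivated columns
given by `l` followed by the plain column of the variable `U`. -/
def gvdU {K : Type*} [Field K] (l : List (K × ℕ)) : Polynomial K :=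
  gvd ((l.map fun zj => (Polynomial.C zj.1, zj.2)) ++ [(Polynomial.X, (0:ℕ))])

/-- Multivariate version: `V[l‖U₁‖…‖U_u)`. -/
def gvdMU {K : Type*} [Field K] (u : ℕ) (l : List (K × ℕ)) : MvPolynomial (Fin u) K :=
  gvd ((l.map fun zj => (MvPolynomial.C zj.1, zj.2)) ++
    (List.finRange u).map (fun i => (MvPolynomial.X i, (0:ℕ))))

/-- The multivariate Vandermonde polynomial `∏_{i < j} (U_j - U_i)`. -/
def mvVandermonde (K : Type*) [Field K] (u : ℕ) : MvPolynomial (Fin u) K :=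
  ∏ j : Fin u, ∏ i ∈ Finset.Iio j, (MvPolynomial.X j - MvPolynomial.X i)

/-- The ordered root multiset attached to distinct roots `x i` with
multiplicities `μ i`. -/
def rootList {K : Type*} (x : Fin m → K) (μ : Fin m → ℕ) : List (K × ℕ) :=
  (List.finRange m).flatMap (fun i => (List.range (μ i)).map (fun j => (x i, j)))

/-- The generalized Sylvester double sum `Sylv^{k,ℓ}` of two monic polynomials
given by their root multisets `Pl` and `Ql`. -/
def sylv {K : Type*} [Field K] (Pl Ql : List (K × ℕ)) (k l : ℕ) : Polynomial K :=
  Polynomial.C ((gvd Pl * gvd Ql)⁻¹) *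
    ∑ S ∈ Finset.powersetCard k (Finset.univ : Finset (Fin Pl.length)),
      ∑ T ∈ Finset.powersetCard l (Finset.univ : Finset (Fin Ql.length)),
        (sgnK S * sgnK T) •
          (Polynomial.C (gvd (subL Ql.get Tᶜ ++ subL Pl.get Sᶜ)) *
            gvdU (subL Ql.get T ++ subL Pl.get S))

/-- `MSylv^{k,ℓ}(P,Q)(U) · V(U)` : the multi Sylvester double sum multiplied by the
ordinary Vandermonde determinant of the block `U` of `u` indeterminates. -/
def msylvV {K : Type*} [Field K] (Pl Ql : List (K × ℕ)) (k l u : ℕ) :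
    MvPolynomial (Fin u) K :=
  MvPolynomial.C ((gvd Pl * gvd Ql)⁻¹) *
    ∑ S ∈ Finset.powersetCard k (Finset.univ : Finset (Fin Pl.length)),
      ∑ T ∈ Finset.powersetCard l (Finset.univ : Finset (Fin Ql.length)),
        (sgnK S * sgnK T) •
          (MvPolynomial.C (gvd (subL Ql.get Tᶜ ++ subL Pl.get Sᶜ)) *
            gvdMU u (subL Ql.get T ++ subL Pl.get S))

/-- The ordered root multiset of a polynomial over an algebraically closed field. -/
def rootListOf {K : Type*} [Field K] (P : Polynomial K) : List (K × ℕ) :=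
  letI := Classical.decEq K
  P.roots.toFinset.toList.flatMap
    (fun z => (List.range (P.rootMultiplicity z)).map (fun j => (z, j)))

/-- The Sylvester double sum of two not-necessarily-monic polynomials. -/
def sylvP {K : Type*} [Field K] (P Q : Polynomial K) (k l : ℕ) : Polynomial K :=
  Polynomial.C (P.leadingCoeff ^ (Q.natDegree - (k + l)) *
      Q.leadingCoeff ^ (P.natDegree - (k + l))) *
    sylv (rootListOf P) (rootListOf Q) k l

/-- Rows of the Sylvester–Habicht matrix at level `j`:
`X^{q-j-1}P, …, P, Q, X Q, …, X^{p-j-1}Q`. -/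
def sylvHabRow {K : Type*} [Field K] (P Q : Polynomial K) (j i : ℕ) : Polynomial K :=
  if i < Q.natDegree - j then Polynomial.X ^ (Q.natDegree - j - 1 - i) * P
  else Polynomial.X ^ (i - (Q.natDegree - j)) * Q

/-- The `j`-th subresultant polynomial of `P` and `Q`, as the polynomial determinant
of the Sylvester–Habicht matrix at level `j`. -/
def Sres {K : Type*} [Field K] (P Q : Polynomial K) (j : ℕ) : Polynomial K :=
  (Matrix.of fun i c : Fin (P.natDegree + Q.natDegree - 2 * j) =>
    if (c : ℕ) < P.natDegree + Q.natDegree - 2 * j - 1 then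
      Polynomial.C ((sylvHabRow P Q j i).coeff (P.natDegree + Q.natDegree - j - 1 - c))
    else
      ∑ t ∈ Finset.range (j + 1),
        Polynomial.C ((sylvHabRow P Q j i).coeff t) * Polynomial.X ^ t).det

/-- Iterated normalized Hermite derivation of a multivariate polynomial: for each
variable `i`, apply `(1/(c i).2!)·∂^{(c i).2}/∂X_i^{(c i).2}`. -/
def hderiv {K : Type*} [Field K] {n : ℕ} (c : Fin n → K × ℕ)
    (f : MvPolynomial (Fin n) K) : MvPolynomial (Fin n) K :=
  (List.finRange n).foldl
    (fun g i => (((c i).2.factorial : K)⁻¹) • ((MvPolynomial.pderiv i)^[(c i).2] g)) f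

/-- Hermite evaluation: apply the normalized derivations prescribed by `c` and
then substitute the points prescribed by `c`. -/
def hermiteEval {K : Type*} [Field K] {n : ℕ} (c : Fin n → K × ℕ)
    (f : MvPolynomial (Fin n) K) : K :=
  MvPolynomial.eval (fun i => (c i).1) (hderiv c f)

/-!
Apply the Hermite evaluation at `P ∖ K` (the operator `∂^{[P∖K]}` followed by substitution of
the roots) to both sides of the expansion of `V[P] · V(U) · g(U)`. Column `i` of `V[K'‖U)`
only involves `U_i`, so the operator acts column by column and turns `V[K'‖U)` into the
confluent Vandermonde determinant `V[K'‖P∖K)`. For `K' ≠ K` of the same size this has two equal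
columns, while for `K' = K` it is a column permutation of `V[P]`, with sign `(-1)^{k(p-k)} s_K`.
Finally `V[P] ≠ 0`, so `g_K` can be read off.
-/

section ConfluentVandermonde

lemma gvd_eq_det (l : List (R × ℕ)) {N : ℕ} (h : l.length = N) :
    gvd l = (Matrix.of fun i j : Fin N => hcol N (l.get (Fin.cast h.symm j)) i).det := by
  subst h; rfl

lemma gvd_ofFn {n : ℕ} (f : Fin n → R × ℕ) :
    gvd (List.ofFn f) = (Matrix.of fun i j : Fin n => hcol n (f j) i).det := by
  simp [gvd_eq_det _ (List.length_ofFn (f := f))]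

lemma gvd_ofFn_comp_perm {n : ℕ} (f : Fin n → R × ℕ) (σ : Equiv.Perm (Fin n)) :
    gvd (List.ofFn (f ∘ σ)) = Equiv.Perm.sign σ * gvd (List.ofFn f) := by
  rw [gvd_ofFn, gvd_ofFn, ← Matrix.det_permute']
  rfl

lemma gvd_cons (z : R × ℕ) (l : List (R × ℕ)) :
    gvd (z :: l) = (-1) ^ l.length * gvd (l ++ [z]) := by
  have hsnoc : l ++ [z] = List.ofFn (Fin.cons z l.get ∘ finRotate (l.length + 1)) := by
    rw [Function.comp_def, ← Fin.snoc_eq_cons_rotate, List.ofFn_succ']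
    simp
  rw [hsnoc, gvd_ofFn_comp_perm, sign_finRotate, List.ofFn_cons, List.ofFn_get]
  simp [← mul_assoc, ← mul_pow]

lemma gvd_append_comm (l₁ l₂ : List (R × ℕ)) :
    gvd (l₁ ++ l₂) = (-1) ^ (l₁.length * l₂.length) * gvd (l₂ ++ l₁) := by
  induction l₁ generalizing l₂ with
  | nil => simp
  | cons z l₁ ih =>
    have hexp : l₁.length + l₂.length + l₁.length * (l₂.length + 1)
        = (l₁.length + 1) * l₂.length + 2 * l₁.length := by ring
    rw [List.cons_append, gvd_cons, List.append_assoc, ih, List.length_append,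
      List.length_append, List.length_singleton, List.append_assoc, List.singleton_append,
      ← mul_assoc, ← pow_add, hexp, pow_add, pow_mul (-1 : R) 2, neg_one_sq, one_pow, mul_one,
      List.length_cons]

lemma gvd_map_splitList {n : ℕ} (S : Finset (Fin n)) (f : Fin n → R × ℕ) :
    gvd ((splitList S).map f) = sgnK S * gvd (List.ofFn f) := by
  have : (splitList S).map f = List.ofFn (f ∘ splitPerm S) := by
    refine List.ext_get (by simp [splitList_length]) fun j h₁ h₂ => ?_
    simp only [List.get_eq_getElem, List.getElem_map, List.getElem_ofFn, Function.comp_apply]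
    rfl
  rw [this, gvd_ofFn_comp_perm, sgnK]

lemma gvd_subL_append_subL_compl {n : ℕ} (S : Finset (Fin n)) (f : Fin n → R × ℕ) :
    gvd (subL f S ++ subL f Sᶜ) =
      (-1) ^ (S.card * (n - S.card)) * sgnK S * gvd (List.ofFn f) := by
  rw [gvd_append_comm, mul_assoc, ← gvd_map_splitList, splitList, List.map_append]
  simp [subL, Finset.card_compl]

lemma gvd_eq_zero_of_not_nodup {l : List (R × ℕ)} (h : ¬ l.Nodup) : gvd l = 0 := by
  obtain ⟨i, j, hget, hij⟩ : ∃ i j, l.get i = l.get j ∧ i ≠ j := by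
    simpa [List.nodup_iff_injective_get, Function.Injective] using h
  exact Matrix.det_zero_of_column_eq hij fun r => congrArg (hcol l.length · r) hget

lemma gvd_subL_append_subL_compl_eq_zero {n : ℕ} {S T : Finset (Fin n)}
    (hcard : T.card = S.card) (hne : T ≠ S) (f : Fin n → R × ℕ) :
    gvd (subL f T ++ subL f Sᶜ) = 0 := by
  obtain ⟨q, hqT, hqS⟩ : ∃ q ∈ T, q ∉ S :=
    Finset.not_subset.mp fun hsub => hne (Finset.eq_of_subset_of_card_le hsub hcard.ge)
  refine gvd_eq_zero_of_not_nodup fun hnd => (List.nodup_append.mp hnd).2.2 (f q) ?_ (f q) ?_ rfl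
  exacts [List.mem_map_of_mem ((Finset.mem_sort _).mpr hqT),
    List.mem_map_of_mem ((Finset.mem_sort _).mpr (Finset.mem_compl.mpr hqS))]

end ConfluentVandermonde

section RootList

lemma rootList_length {α : Type*} {m : ℕ} (x : Fin m → α) (μ : Fin m → ℕ) :
    (rootList x μ).length = ∑ i, μ i := by
  simp [rootList, Fin.sum_univ_def]

lemma mem_rootList {α : Type*} {m : ℕ} {x : Fin m → α} {μ : Fin m → ℕ} {i : Fin m} {t : ℕ}
    (ht : t < μ i) :
    (x i, t) ∈ rootList x μ := by
  simp only [rootList, List.mem_flatMap, List.mem_map, List.mem_range]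
  exact ⟨i, List.mem_finRange i, t, ht, rfl⟩

lemma eval_hasseDeriv_ofFn [DecidableEq R] {N : ℕ} (w : Fin N → R) (z : R) (t : ℕ) :
    (hasseDeriv t (Polynomial.ofFn N w)).eval z = ∑ r, w r * hcol N (z, t) r := by
  simp only [ofFn_eq_sum_monomial, map_sum, hasseDeriv_monomial, eval_finsetSum, eval_monomial,
    hcol]
  exact Finset.sum_congr rfl fun r _ => by ring

lemma le_rootMultiplicity_of_eval_hasseDeriv_eq_zero {f : R[X]} (hf : f ≠ 0) {z : R} {m : ℕ}
    (h : ∀ t < m, (hasseDeriv t f).eval z = 0) : m ≤ f.rootMultiplicity z := by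
  rw [rootMultiplicity_eq_natTrailingDegree, ← taylor_apply]
  refine le_natTrailingDegree (fun ht => hf (taylor_injective z (by rw [ht, map_zero])))
    fun t ht => ?_
  rw [taylor_coeff]
  exact h t ht

variable {K : Type*} [Field K]

lemma sum_le_natDegree_of_le_rootMultiplicity {ι : Type*} [Fintype ι] {f : K[X]} (hf : f ≠ 0)
    {x : ι → K} (hx : Function.Injective x) {μ : ι → ℕ}
    (h : ∀ i, μ i ≤ f.rootMultiplicity (x i)) : ∑ i, μ i ≤ f.natDegree := by
  have hdvd : ∏ i, (X - C (x i)) ^ μ i ∣ f :=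
    Fintype.prod_dvd_of_coprime (fun i j hij => ((pairwise_coprime_X_sub_C hx) hij).pow)
      fun i => (pow_dvd_pow _ (h i)).trans (pow_rootMultiplicity_dvd f (x i))
  simpa [natDegree_prod_of_monic, (monic_X_sub_C _).pow] using natDegree_le_of_dvd hdvd hf

/-- A left null vector `w` of the confluent Vandermonde matrix is the coefficient vector of a
polynomial of degree `< p` vanishing at each `x i` to order `μ i`, hence `w = 0`. -/
lemma gvd_rootList_ne_zero {m : ℕ} {x : Fin m → K} (hx : Function.Injective x) (μ : Fin m → ℕ) :
    gvd (rootList x μ) ≠ 0 := by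
  classical
  intro h0
  obtain ⟨w, hw0, hw⟩ := Matrix.exists_vecMul_eq_zero_iff.mpr h0
  set f := Polynomial.ofFn _ w
  have hf0 : f ≠ 0 := fun hf => hw0 (injective_ofFn _ (hf.trans (ofFn_zero _).symm))
  have hdeg : f.natDegree < (rootList x μ).length :=
    (natDegree_lt_iff_degree_lt hf0).mpr (ofFn_degree_lt w)
  have hmult : ∀ i, μ i ≤ f.rootMultiplicity (x i) := fun i =>
    le_rootMultiplicity_of_eval_hasseDeriv_eq_zero hf0 fun t ht => by
      obtain ⟨j, hj⟩ := List.mem_iff_get.mp (mem_rootList (x := x) ht)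
      rw [eval_hasseDeriv_ofFn, ← hj]
      simpa [Matrix.vecMul, dotProduct, mul_comm] using congrFun hw j
  have := sum_le_natDegree_of_le_rootMultiplicity hf0 hx hmult
  rw [rootList_length] at hdeg
  omega

end RootList

section HermiteEvaluation

variable {K : Type*} [Field K] {n : ℕ}

def hermiteStep (c : Fin n → K × ℕ) (i : Fin n) : Module.End K (MvPolynomial (Fin n) K) :=
  ((c i).2.factorial : K)⁻¹ • (MvPolynomial.pderiv i).toLinearMap ^ (c i).2

lemma List.foldl_apply_eq_prod_reverse_map_apply {ι M : Type*} [AddCommMonoid M] [Module K M]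
    (φ : ι → Module.End K M) (L : List ι) (f : M) :
    L.foldl (fun g i => φ i g) f = (L.map φ).reverse.prod f := by
  induction L generalizing f with
  | nil => rfl
  | cons i L ih => simp [ih, Module.End.mul_apply]

lemma hderiv_eq_foldl (c : Fin n → K × ℕ) (f : MvPolynomial (Fin n) K) :
    hderiv c f = (List.finRange n).foldl (fun g i => hermiteStep c i g) f := by
  simp [hderiv, hermiteStep, Module.End.pow_apply]

def hermiteEvalₗ (c : Fin n → K × ℕ) : MvPolynomial (Fin n) K →ₗ[K] K :=
  (MvPolynomial.aeval fun i => (c i).1).toLinearMap ∘ₗ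
    ((List.finRange n).map (hermiteStep c)).reverse.prod

@[simp]
lemma coe_hermiteEvalₗ (c : Fin n → K × ℕ) : ⇑(hermiteEvalₗ c) = hermiteEval c := by
  ext f
  simp [hermiteEvalₗ, hermiteEval, hderiv_eq_foldl, List.foldl_apply_eq_prod_reverse_map_apply]

lemma hermiteEval_C_mul (c : Fin n → K × ℕ) (a : K) (f : MvPolynomial (Fin n) K) :
    hermiteEval c (MvPolynomial.C a * f) = a * hermiteEval c f := by
  rw [← MvPolynomial.smul_eq_C_mul, ← coe_hermiteEvalₗ, map_smul, smul_eq_mul]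

lemma iterate_pderiv_monomial (i : Fin n) (t : ℕ) (s : Fin n →₀ ℕ) (a : K) :
    (MvPolynomial.pderiv i)^[t] (MvPolynomial.monomial s a) =
      MvPolynomial.monomial (s - Finsupp.single i t) ((s i).descFactorial t * a) := by
  induction t with
  | zero => simp
  | succ t ih =>
    rw [Function.iterate_succ_apply', ih, MvPolynomial.pderiv_monomial, tsub_tsub,
      ← Finsupp.single_add, Nat.descFactorial_succ]
    congr 1
    simp only [Finsupp.tsub_apply, Finsupp.single_eq_same, Nat.cast_mul]
    ring

lemma hermiteStep_monomial [CharZero K] (c : Fin n → K × ℕ) (i : Fin n) (s : Fin n →₀ ℕ)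
    (a : K) :
    hermiteStep c i (MvPolynomial.monomial s a) =
      MvPolynomial.monomial (s - Finsupp.single i (c i).2) ((s i).choose (c i).2 * a) := by
  rw [hermiteStep, LinearMap.smul_apply, Module.End.pow_apply, Derivation.coeFn_coe,
    iterate_pderiv_monomial, MvPolynomial.smul_monomial, Nat.descFactorial_eq_factorial_mul_choose,
    smul_eq_mul, Nat.cast_mul, ← mul_assoc, ← mul_assoc,
    inv_mul_cancel₀ (Nat.cast_ne_zero.mpr (Nat.factorial_ne_zero _)), one_mul]

lemma foldl_hermiteStep_monomial [CharZero K] (c : Fin n → K × ℕ) {L : List (Fin n)}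
    (hL : L.Nodup) (s : Fin n →₀ ℕ) (a : K) :
    L.foldl (fun g i => hermiteStep c i g) (MvPolynomial.monomial s a) =
      MvPolynomial.monomial (s - (L.map fun i => Finsupp.single i (c i).2).sum)
        ((L.map fun i => ((s i).choose (c i).2 : K)).prod * a) := by
  induction L generalizing s a with
  | nil => simp
  | cons i L ih =>
    obtain ⟨hiL, hL⟩ := List.nodup_cons.mp hL
    have hs : L.map (fun j => (((s - Finsupp.single i (c i).2) j).choose (c j).2 : K)) =
        L.map fun j => ((s j).choose (c j).2 : K) :=
      List.map_congr_left fun j hj => by simp [show i ≠ j by rintro rfl; exact hiL hj]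
    rw [List.foldl_cons, hermiteStep_monomial, ih hL, hs]
    simp only [List.map_cons, List.sum_cons, List.prod_cons, tsub_tsub, mul_assoc, mul_left_comm]

lemma hermiteEval_monomial [CharZero K] (c : Fin n → K × ℕ) (s : Fin n →₀ ℕ) (a : K) :
    hermiteEval c (MvPolynomial.monomial s a) =
      a * ∏ i, ((s i).choose (c i).2 * (c i).1 ^ (s i - (c i).2)) := by
  rw [hermiteEval, hderiv_eq_foldl, foldl_hermiteStep_monomial c (List.nodup_finRange n),
    MvPolynomial.eval_monomial, Finsupp.prod_fintype _ _ fun i => pow_zero _, ← Fin.sum_univ_def,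
    ← Fin.prod_univ_def]
  simp only [Finsupp.tsub_apply, Finsupp.finsetSum_apply, Finsupp.single_apply,
    Finset.sum_ite_eq', Finset.mem_univ, if_true, Finset.prod_mul_distrib]
  ring

lemma hcol_map {S : Type*} [CommRing S] (φ : R →+* S) (N : ℕ) (z : R) (j : ℕ) (r : Fin N) :
    hcol N (φ z, j) r = φ (hcol N (z, j) r) := by
  simp [hcol]

lemma hcol_zero (N : ℕ) (z : R) (r : Fin N) : hcol N (z, 0) r = z ^ (r : ℕ) := by
  simp [hcol]

lemma hermiteEval_prod_X_pow [CharZero K] {N : ℕ} (c : Fin n → K × ℕ) (r : Fin n → Fin N) :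
    hermiteEval c (∏ i, MvPolynomial.X i ^ (r i : ℕ)) = ∏ i, hcol N (c i) (r i) := by
  have : ∏ i, MvPolynomial.X i ^ (r i : ℕ) =
      MvPolynomial.monomial (Finsupp.equivFunOnFinite.symm fun i => (r i : ℕ)) (1 : K) := by
    rw [MvPolynomial.monomial_eq, Finsupp.prod_fintype _ _ fun i => pow_zero _]
    simp
  rw [this, hermiteEval_monomial, one_mul]
  rfl

lemma hermiteEval_gvdMU [CharZero K] {u : ℕ} (c : Fin u → K × ℕ) (l : List (K × ℕ)) :
    hermiteEval c (gvdMU u l) = gvd (l ++ (List.finRange u).map c) := by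
  have hU : gvdMU u l = gvd (List.ofFn (Fin.append
      ((fun zj => (MvPolynomial.C zj.1, zj.2)) ∘ l.get) fun i => (MvPolynomial.X i, 0))) := by
    rw [gvdMU, List.ofFn_fin_append, ← List.map_ofFn, List.ofFn_get, List.ofFn_eq_map]
  have hK : l ++ (List.finRange u).map c = List.ofFn (Fin.append l.get c) := by
    rw [List.ofFn_fin_append, List.ofFn_get, List.ofFn_eq_map]
  rw [hU, hK, gvd_ofFn, gvd_ofFn, Matrix.det_apply', Matrix.det_apply', ← coe_hermiteEvalₗ,
    map_sum]
  refine Finset.sum_congr rfl fun σ _ => ?_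
  simp only [Fin.prod_univ_add, Matrix.of_apply, Fin.append_left, Fin.append_right, hcol_map,
    hcol_zero, Function.comp_apply, ← map_prod, ← mul_assoc]
  rw [← map_intCast (MvPolynomial.C : K →+* MvPolynomial (Fin u) K), ← map_mul, coe_hermiteEvalₗ,
    hermiteEval_C_mul, hermiteEval_prod_X_pow]

end HermiteEvaluation

/-- multivariate symmetric Hermite interpolation: the coordinates
of a symmetric polynomial `g` in the basis `V[K‖U)/(V[P]V(U))` are
`g_K = (−1)^{k(p−k)} s_K · ∂^{[P∖K]}(V·g)(P∖K)`. -/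
theorem hermite_interpolation_coords {K : Type*} [Field K] [CharZero K] {m k : ℕ}
    (x : Fin m → K) (μ : Fin m → ℕ) (hx : Function.Injective x)
    (g : MvPolynomial (Fin ((rootList x μ).length - k)) K)
    (gc : {S : Finset (Fin (rootList x μ).length) // S.card = k} → K)
    (hgc : MvPolynomial.C (gvd (rootList x μ)) *
        (g * mvVandermonde K ((rootList x μ).length - k)) =
      ∑ S : {S : Finset (Fin (rootList x μ).length) // S.card = k},
        MvPolynomial.C (gc S) *
          gvdMU ((rootList x μ).length - k) (subL (rootList x μ).get S.1)) :
    ∀ S : {S : Finset (Fin (rootList x μ).length) // S.card = k},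
      gc S = (-1 : K) ^ (k * ((rootList x μ).length - k)) * (sgnK S.1 : K) *
        hermiteEval
          (fun i => (rootList x μ).get
            ((S.1ᶜ.orderIsoOfFin (by simp [Finset.card_compl, S.2])) i))
          (mvVandermonde K ((rootList x μ).length - k) * g) := by
  intro S
  set c : Fin ((rootList x μ).length - k) → K × ℕ :=
    fun i => (rootList x μ).get (S.1ᶜ.orderIsoOfFin (by simp [Finset.card_compl, S.2]) i)
  have hc : (List.finRange ((rootList x μ).length - k)).map c = subL (rootList x μ).get S.1ᶜ :=
    List.ext_getElem (by simp [subL, Finset.card_compl, S.2]) fun i _ _ => by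
      simp [c, subL, Finset.orderEmbOfFin_apply]
  have H := congrArg (hermiteEval c) hgc
  rw [hermiteEval_C_mul, ← coe_hermiteEvalₗ, map_sum] at H
  simp only [coe_hermiteEvalₗ, hermiteEval_C_mul, hermiteEval_gvdMU, hc] at H
  rw [Finset.sum_eq_single_of_mem S (Finset.mem_univ S) fun T _ hTS => by
      rw [gvd_subL_append_subL_compl_eq_zero (T.2.trans S.2.symm) fun h => hTS (Subtype.ext h),
        mul_zero],
    gvd_subL_append_subL_compl, List.ofFn_get, S.2] at H
  set ε : K := (-1) ^ (k * ((rootList x μ).length - k)) * sgnK S.1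
  have hε : ε ^ 2 = 1 := by
    rw [mul_pow, ← pow_mul, mul_comm _ 2, pow_mul, neg_one_sq, one_pow, one_mul, sgnK,
      ← Int.cast_pow, ← Units.val_pow_eq_pow_val, Int.units_sq, Units.val_one, Int.cast_one]
  have hE : hermiteEval c (g * mvVandermonde K _) = gc S * ε :=
    mul_left_cancel₀ (gvd_rootList_ne_zero hx μ) (H.trans (by ring))
  rw [mul_comm (mvVandermonde K _), hE]
  linear_combination -gc S * hε

end
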